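/- arXiv:1409.0275 — 2 statements merged into one kernel-verified Lean document; each statement's English description precedes it below -/
import Mathlib

section
/- With Φ the algebraic past of ℤ^d defined by Φ = {(n₁,…,n_d) : ∃ j ∈ {0,…,d−1}, ∑_{ℓ=1}^{d−k} n_ℓ = 0 for k < j and ∑_{ℓ=1}^{d−j} n_ℓ < 0}, and f_n = (n,n,…,n) ∈ ℤ^d, for each n ≥ 1 the set {s ∈ ℤ₊^d : s <_Φ f_n} is finite, where s <_Φ f_n means s − f_n ∈ Φ. -/
open Finset in
/-- Partial sum of the first `m` coordinates. -/
def psum (d : ℕ) (n : Fin d → ℤ) (m : ℕ) : ℤ :=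
  ∑ ℓ : Fin d, if (ℓ : ℕ) < m then n ℓ else 0

/-- The lexicographic-type algebraic past of ℤ^d. -/
def zdPast (d : ℕ) : Set (Fin d → ℤ) :=
  {n | ∃ j < d, (∀ k < j, psum d n (d - k) = 0) ∧ psum d n (d - j) < 0}

/-- For f_n = (n,…,n), the set of s ∈ ℤ₊^d with s <_Φ f_n is finite. -/
theorem finitely_many_below_fn (d : ℕ) (hd : 1 ≤ d) (n : ℕ) (hn : 1 ≤ n) :
    {s : Fin d → ℤ | (∀ i, 0 ≤ s i) ∧
      (s - (fun _ => (n : ℤ))) ∈ zdPast d}.Finite := by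
  apply Set.Finite.subset (Set.Finite.pi (fun _ : Fin d => Set.finite_Icc (0 : ℤ) (d * n)))
  rintro s ⟨hpos, j, hj, hzero, hneg⟩
  have hfull : psum d (s - fun _ => (n : ℤ)) d = (∑ ℓ : Fin d, s ℓ) - d * n := by
    simp [psum, Fin.is_lt, Finset.sum_sub_distrib, mul_comm]
  have hsum : psum d (s - fun _ => (n : ℤ)) d ≤ 0 := by
    rcases Nat.eq_zero_or_pos j with rfl | hj1
    · simpa using hneg.le
    · have := hzero 0 hj1
      simpa using this.le
  have hsum' : ∑ ℓ : Fin d, s ℓ ≤ (d : ℤ) * n := by linarith [hfull ▸ hsum]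
  intro i _
  refine ⟨hpos i, le_trans ?_ hsum'⟩
  exact Finset.single_le_sum (fun ℓ _ => hpos ℓ) (Finset.mem_univ i)
end

section
/- In the discrete Heisenberg group G of integer 3×3 upper unitriangular matrices, the set S = {T₃^{n₃}T₂^{n₂}T₁^{n₁} : n₃ ≥ n₂ ≥ 0 and n₃² ≥ n₁ ≥ 0} is closed under matrix multiplication, where T₁, T₂, T₃ are the standard elementary generators (T₁ has a 1 in the (1,3) entry, T₂ in the (1,2) entry, T₃ in the (2,3) entry, and 1's on the diagonal). -/
/-- The Heisenberg matrix T₃^{n₃}T₂^{n₂}T₁^{n₁}: first row (1, n₂, n₁),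
second row (0, 1, n₃), third row (0, 0, 1). -/
def heisMat (n₁ n₂ n₃ : ℤ) : Matrix (Fin 3) (Fin 3) ℤ :=
  !![1, n₂, n₁; 0, 1, n₃; 0, 0, 1]

/-- The semigroup S in the Heisenberg group. -/
def heisS : Set (Matrix (Fin 3) (Fin 3) ℤ) :=
  {A | ∃ n₁ n₂ n₃ : ℤ, A = heisMat n₁ n₂ n₃ ∧
    n₂ ≤ n₃ ∧ 0 ≤ n₂ ∧ n₁ ≤ n₃ ^ 2 ∧ 0 ≤ n₁}

theorem heisMat_mul (a₁ a₂ a₃ b₁ b₂ b₃ : ℤ) :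
    heisMat a₁ a₂ a₃ * heisMat b₁ b₂ b₃ =
      heisMat (a₁ + b₁ + a₂ * b₃) (a₂ + b₂) (a₃ + b₃) := by
  ext i j
  fin_cases i <;> fin_cases j <;> simp [heisMat, Matrix.mul_apply, Fin.sum_univ_three] <;> ring

theorem add_add_mul_le_sq_add {R : Type*} [CommSemiring R] [PartialOrder R] [IsOrderedRing R]
    {a₁ a₂ a₃ b₁ b₃ : R} (ha₁ : a₁ ≤ a₃ ^ 2) (ha₂ : a₂ ≤ a₃) (ha₃ : 0 ≤ a₃)
    (hb₁ : b₁ ≤ b₃ ^ 2) (hb₃ : 0 ≤ b₃) :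
    a₁ + b₁ + a₂ * b₃ ≤ (a₃ + b₃) ^ 2 :=
  calc a₁ + b₁ + a₂ * b₃ ≤ a₃ ^ 2 + b₃ ^ 2 + a₃ * b₃ := by gcongr
    _ ≤ a₃ ^ 2 + b₃ ^ 2 + 2 * a₃ * b₃ := by
      gcongr
      exact le_mul_of_one_le_left ha₃ one_le_two
    _ = (a₃ + b₃) ^ 2 := by ring

/-- S is closed under matrix multiplication. -/
theorem heisS_mul_closed : ∀ A ∈ heisS, ∀ B ∈ heisS, A * B ∈ heisS := by
  rintro _ ⟨a₁, a₂, a₃, rfl, ha₂₃, ha₂, ha₁₃, ha₁⟩ _ ⟨b₁, b₂, b₃, rfl, hb₂₃, hb₂, hb₁₃, hb₁⟩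
  refine ⟨_, _, _, heisMat_mul .., add_le_add ha₂₃ hb₂₃, add_nonneg ha₂ hb₂,
    add_add_mul_le_sq_add ha₁₃ ha₂₃ (ha₂.trans ha₂₃) hb₁₃ (hb₂.trans hb₂₃),
    add_nonneg (add_nonneg ha₁ hb₁) (mul_nonneg ha₂ (hb₂.trans hb₂₃))⟩
end
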